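/- Every nonzero sub-bimodule of L(V,W) (simultaneously a left L(W)-submodule and right L(V)-submodule) contains every finite-rank linear transformation from V to W. In particular, if V or W is finite-dimensional, the only sub-bimodules of L(V,W) are 0 and L(V,W). -/

import Mathlib

variable {D V W : Type*} [DivisionRing D]
  [AddCommGroup V] [Module D V] [AddCommGroup W] [Module D W]

/-- `I` is a sub-bimodule of `L(V,W)`: closed under addition, under left
composition with endomorphisms of `W`, and under right composition with
endomorphisms of `V`. -/
def IsBiSubmodule (I : Set (V →ₗ[D] W)) : Prop :=
  (0 : V →ₗ[D] W) ∈ I ∧ (∀ S T : V →ₗ[D] W, S ∈ I → T ∈ I → S + T ∈ I) ∧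
    (∀ S ∈ I, ∀ A : W →ₗ[D] W, A.comp S ∈ I) ∧
    (∀ S ∈ I, ∀ A : V →ₗ[D] V, S.comp A ∈ I)

/-! A nonzero `S ∈ I` with `S v₀ ≠ 0` and a functional `g` with `g (S v₀) ≠ 0` let one
sandwich `S` between rank-one maps to produce any rank-one map `x ↦ f x • w`; a map of
finite rank is a finite sum of rank-one maps, and if `V` or `W` is finite-dimensional every
map has finite rank. -/

theorem LinearMap.eq_sum_smulRight_coord_rangeRestrict {R M N ι : Type*} [Semiring R]
    [AddCommMonoid M] [Module R M] [AddCommMonoid N] [Module R N] [Fintype ι]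
    (T : M →ₗ[R] N) (b : Module.Basis ι R (LinearMap.range T)) :
    T = ∑ i, ((b.coord i).comp T.rangeRestrict).smulRight (b i : N) := by
  ext x
  have h := congr(($(b.sum_repr (T.rangeRestrict x)) : N))
  simp only [Submodule.coe_sum, Submodule.coe_smul] at h
  simp [h]

namespace IsBiSubmodule

variable {I : Set (V →ₗ[D] W)}

theorem sum_mem (hI : IsBiSubmodule I) {ι : Type*} (s : Finset ι) {S : ι → V →ₗ[D] W}
    (hS : ∀ i ∈ s, S i ∈ I) : ∑ i ∈ s, S i ∈ I :=
  Finset.sum_induction _ (· ∈ I) hI.2.1 hI.1 hS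

theorem smulRight_mem (hI : IsBiSubmodule I) (hne : ∃ S ∈ I, S ≠ 0)
    (f : V →ₗ[D] D) (w : W) : f.smulRight w ∈ I := by
  obtain ⟨S, hS, hS0⟩ := hne
  obtain ⟨v₀, hv₀⟩ : ∃ v₀, S v₀ ≠ 0 := by
    by_contra! h
    exact hS0 (LinearMap.ext h)
  obtain ⟨g, hg⟩ := Module.Projective.exists_dual_ne_zero D hv₀
  -- `D` need not be commutative, so the scalar `g (S v₀)` is cancelled on the `W` side.
  have hmem : (g.smulRight ((g (S v₀))⁻¹ • w)).comp (S.comp (f.smulRight v₀)) ∈ I :=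
    hI.2.2.1 _ (hI.2.2.2 S hS _) _
  convert hmem using 1
  ext x
  simp [mul_smul, hg]

theorem mem_of_finiteDimensional_range (hI : IsBiSubmodule I) (hne : ∃ S ∈ I, S ≠ 0)
    (T : V →ₗ[D] W) [FiniteDimensional D (LinearMap.range T)] : T ∈ I := by
  rw [T.eq_sum_smulRight_coord_rangeRestrict (Module.finBasis D _)]
  exact hI.sum_mem _ fun i _ ↦ hI.smulRight_mem hne _ _

theorem eq_singleton_zero_or_exists_ne_zero (hI : IsBiSubmodule I) : I = {0} ∨ ∃ S ∈ I, S ≠ 0 := by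
  by_cases h : ∃ S ∈ I, S ≠ 0
  · exact Or.inr h
  · push Not at h
    exact Or.inl (Set.eq_singleton_iff_unique_mem.mpr ⟨hI.1, h⟩)

end IsBiSubmodule

theorem stmt_18 :
    (∀ I : Set (V →ₗ[D] W), IsBiSubmodule I → (∃ T ∈ I, T ≠ 0) →
      ∀ T : V →ₗ[D] W, FiniteDimensional D (LinearMap.range T) → T ∈ I) ∧
    ((FiniteDimensional D V ∨ FiniteDimensional D W) →
      ∀ I : Set (V →ₗ[D] W), IsBiSubmodule I → I = {0} ∨ I = Set.univ) := by
  refine ⟨fun I hI hne T _ ↦ hI.mem_of_finiteDimensional_range hne T, fun hfin I hI ↦ ?_⟩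
  refine hI.eq_singleton_zero_or_exists_ne_zero.imp_right fun hne ↦ Set.eq_univ_of_forall fun T ↦ ?_
  have : FiniteDimensional D (LinearMap.range T) := by
    rcases hfin with _ | _ <;> infer_instance
  exact hI.mem_of_finiteDimensional_range hne T
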